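/- arXiv:1502.00521 — 5 statements merged into one kernel-verified Lean document; each statement's English description precedes it below -/
import Mathlib

section
/- If a row vector γ and square matrix G satisfy that γ·e^{Gτ} is entrywise strictly positive for some τ > 0, then there exists λ₀ > 0 such that for all λ ≥ λ₀ with λτ an integer, the vector γ·(I + G/λ)^{λτ} is entrywise strictly positive. -/
/-!
Expanding binomially, `(1 + A/n)^n = ∑ₖ C(n,k) n⁻ᵏ Aᵏ` with coefficients `C(n,k) n⁻ᵏ ≤ 1/k!`
tending to `1/k!`, so by dominated convergence for series (Tannery's theorem) `(1 + A/n)^n → exp A`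
in any real Banach algebra. Taking `A = τG` and `n = λτ`, the row vector `γ (I + G/λ)^n` tends to
`γ exp(τG)`, whose entries are positive, hence so are those of `γ (I + G/λ)^n` for large `n`.
-/

open Matrix NormedSpace Filter Finset Topology

lemma choose_mul_inv_pow_le_inv_factorial (n k : ℕ) :
    n.choose k * (n : ℝ)⁻¹ ^ k ≤ (k.factorial : ℝ)⁻¹ := by
  calc n.choose k * (n : ℝ)⁻¹ ^ k ≤ (n ^ k / k.factorial) * (n : ℝ)⁻¹ ^ k := by
        gcongr; exact Nat.choose_le_pow_div k n
    _ = (n * (n : ℝ)⁻¹) ^ k / k.factorial := by ring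
    _ ≤ (k.factorial : ℝ)⁻¹ := by
        rw [div_eq_mul_inv]
        refine mul_le_of_le_one_left (by positivity) (pow_le_one₀ (by positivity) ?_)
        exact mul_inv_le_one

lemma tendsto_choose_mul_inv_pow (k : ℕ) :
    Tendsto (fun n : ℕ => n.choose k * (n : ℝ)⁻¹ ^ k) atTop (𝓝 (k.factorial : ℝ)⁻¹) := by
  have h : Tendsto (fun n : ℕ => (n : ℝ) * (n : ℝ)⁻¹) atTop (𝓝 1) :=
    tendsto_const_nhds.congr' <| by
      filter_upwards [eventually_ge_atTop 1] with n hn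
      rw [mul_inv_cancel₀ (by positivity)]
  simpa using ProbabilityTheory.tendsto_choose_mul_pow_atTop k h

section BanachAlgebra

variable {𝔸 : Type*} [NormedRing 𝔸] [NormedAlgebra ℝ 𝔸]

lemma one_add_smul_pow_eq_tsum (c : ℝ) (A : 𝔸) (n : ℕ) :
    (1 + c • A) ^ n = ∑' k, (n.choose k * c ^ k : ℝ) • A ^ k := by
  rw [tsum_eq_sum (s := range (n + 1)) fun k hk => by
      rw [Nat.choose_eq_zero_of_lt (by simpa using hk), Nat.cast_zero, zero_mul, zero_smul],
    add_comm, (Commute.one_right _).add_pow]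
  refine sum_congr rfl fun k _ => ?_
  rw [one_pow, mul_one, smul_pow, ← Nat.cast_comm, ← nsmul_eq_mul, mul_smul,
    Nat.cast_smul_eq_nsmul]

theorem tendsto_one_add_inv_smul_pow_exp [CompleteSpace 𝔸] (A : 𝔸) :
    Tendsto (fun n : ℕ => (1 + (n : ℝ)⁻¹ • A) ^ n) atTop (𝓝 (exp A)) := by
  simp_rw [one_add_smul_pow_eq_tsum, exp_eq_tsum ℝ]
  refine tendsto_tsum_of_dominated_convergence (norm_expSeries_summable' (𝕂 := ℝ) A)
    (fun k => (tendsto_choose_mul_inv_pow k).smul_const _) (.of_forall fun n k => ?_)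
  rw [norm_smul, norm_smul, Real.norm_of_nonneg (by positivity), Real.norm_of_nonneg (by positivity)]
  gcongr
  exact choose_mul_inv_pow_le_inv_factorial n k

end BanachAlgebra

/-- If `γ e^{Gτ}` is entrywise strictly positive for some `τ > 0`, then there is `lam₀ > 0`
such that for all `λ ≥ lam₀` with `λτ` an integer, `γ (I + G/λ)^{λτ}` is entrywise positive. -/
theorem stmt5 (u : ℕ) (γ : Fin u → ℝ) (G : Matrix (Fin u) (Fin u) ℝ) (τ : ℝ) (hτ : 0 < τ)
    (hpos : ∀ i, 0 < (γ ᵥ* NormedSpace.exp (τ • G)) i) :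
    ∃ lam₀ : ℝ, 0 < lam₀ ∧ ∀ lam : ℝ, lam₀ ≤ lam → ∀ n : ℕ, (n : ℝ) = lam * τ →
      ∀ i, 0 < (γ ᵥ* (1 + lam⁻¹ • G) ^ n) i := by
  -- a Banach-algebra norm on matrices; it induces the entrywise topology used in the statement
  let _ : NormedRing (Matrix (Fin u) (Fin u) ℝ) := Matrix.linftyOpNormedRing
  let _ : NormedAlgebra ℝ (Matrix (Fin u) (Fin u) ℝ) := Matrix.linftyOpNormedAlgebra
  have hlim : Tendsto (fun n : ℕ => γ ᵥ* (1 + (n : ℝ)⁻¹ • (τ • G)) ^ n) atTop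
      (𝓝 (γ ᵥ* exp (τ • G))) :=
    ((continuous_const.matrix_vecMul continuous_id).tendsto _).comp
      (tendsto_one_add_inv_smul_pow_exp (τ • G))
  have hev : ∀ᶠ n : ℕ in atTop, ∀ i, 0 < (γ ᵥ* (1 + (n : ℝ)⁻¹ • (τ • G)) ^ n) i :=
    eventually_all.2 fun i => (tendsto_pi_nhds.1 hlim i).eventually (lt_mem_nhds (hpos i))
  obtain ⟨N, hN⟩ := eventually_atTop.1 hev
  refine ⟨(N + 1) / τ, by positivity, fun lam hlam n hn => ?_⟩
  have hlamτ : (N : ℝ) + 1 ≤ lam * τ := (div_le_iff₀ hτ).1 hlam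
  have hscale : lam⁻¹ • G = (n : ℝ)⁻¹ • (τ • G) := by
    rw [hn, smul_smul, mul_inv, inv_mul_cancel_right₀ hτ.ne']
  rw [hscale]
  exact hN n (by exact_mod_cast (show (N : ℝ) ≤ n by linarith))
end

section
/- Let (α, A) be a representation of order n and (γ, G) a representation of order m of matrix-exponential functions. If there exists an n×m matrix W with γ = α·W, A·W = W·G, and W·𝟙_m = 𝟙_n, then the densities coincide: −α·A·e^{Ax}·𝟙_n = −γ·G·e^{Gx}·𝟙_m for all x ≥ 0. -/
/-!
The intertwining relation `A W = W G` passes to every power and hence, term by term, to the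
exponential series, so `e^{xA} W = W e^{xG}`. Inserting `𝟙 = W 𝟙` then gives
`α A e^{xA} 𝟙 = α A e^{xA} W 𝟙 = α W G e^{xG} 𝟙 = γ G e^{xG} 𝟙`.
-/

open Matrix NormedSpace

namespace Matrix

variable {m n 𝕂 : Type*} [Fintype m] [DecidableEq m] [Fintype n] [DecidableEq n]

theorem pow_mul_eq_mul_pow_of_mul_eq_mul [Semiring 𝕂] {A : Matrix m m 𝕂} {G : Matrix n n 𝕂}
    {W : Matrix m n 𝕂} (h : A * W = W * G) (k : ℕ) : A ^ k * W = W * G ^ k := by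
  induction k with
  | zero => simp
  | succ k ih =>
    rw [pow_succ, pow_succ, Matrix.mul_assoc, h, ← Matrix.mul_assoc, ih, Matrix.mul_assoc]

open scoped Norms.Operator in
theorem exp_mul_eq_mul_exp_of_mul_eq_mul [RCLike 𝕂] {A : Matrix m m 𝕂} {G : Matrix n n 𝕂}
    {W : Matrix m n 𝕂} (h : A * W = W * G) : exp A * W = W * exp G := by
  have hA := (exp_series_hasSum_exp' (𝕂 := 𝕂) A).map (addMonoidHomMulRight W)
    (continuous_id.matrix_mul continuous_const)
  have hG := (exp_series_hasSum_exp' (𝕂 := 𝕂) G).map (addMonoidHomMulLeft W)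
    (continuous_const.matrix_mul continuous_id)
  refine hA.unique (hG.congr_fun fun k => ?_)
  simp [Matrix.smul_mul, Matrix.mul_smul, pow_mul_eq_mul_pow_of_mul_eq_mul h]

end Matrix

/-- Representation transformation: if `γ = α W`, `A W = W G` and `W 𝟙 = 𝟙`, then the two
matrix-exponential densities coincide. -/
theorem stmt9 (n m : ℕ) (α : Fin n → ℝ) (A : Matrix (Fin n) (Fin n) ℝ)
    (γ : Fin m → ℝ) (G : Matrix (Fin m) (Fin m) ℝ) (W : Matrix (Fin n) (Fin m) ℝ)
    (h1 : γ = α ᵥ* W) (h2 : A * W = W * G) (h3 : W *ᵥ (fun _ => 1) = fun _ => 1) :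
    ∀ x : ℝ, 0 ≤ x →
      -((α ᵥ* (A * NormedSpace.exp (x • A))) ⬝ᵥ fun _ => 1) =
      -((γ ᵥ* (G * NormedSpace.exp (x • G))) ⬝ᵥ fun _ => 1) := by
  intro x _
  have hexp : exp (x • A) * W = W * exp (x • G) :=
    exp_mul_eq_mul_exp_of_mul_eq_mul (by rw [Matrix.smul_mul, Matrix.mul_smul, h2])
  have hdensity : A * exp (x • A) * W = W * (G * exp (x • G)) := by
    rw [Matrix.mul_assoc, hexp, ← Matrix.mul_assoc, h2, Matrix.mul_assoc]
  rw [← h3, dotProduct_mulVec, vecMul_vecMul, hdensity, ← vecMul_vecMul, ← h1]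
end

section
/- Let G be a u×u matrix, λ > 0 and n ≥ 1. Define the u×(u+n) matrix W whose first u×u block equals (I + G/λ)^n and whose j-th additional column (j = 1,…,n) equals (I + G/λ)^{n−j}·(−G𝟙/λ). Let B be the (u+n)×(u+n) block matrix with G in the top-left u×u block, −G𝟙 as the column immediately to its right, an Erlang tail of n states with diagonal −λ and superdiagonal λ, and zeros elsewhere. Then G·W = W·B and W·𝟙_{u+n} = 𝟙_u. -/
/-!
Put `A = 1 + λ⁻¹ G`, so that `G = λ (A - 1)` commutes with `A`, and `c = 𝟙 - A 𝟙 = -λ⁻¹ G 𝟙`.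
Then `G (A^p c) = λ (A^(p+1) c - A^p c)`: `G` maps each tail column `A^(n-1-j) c` of `W` to `λ` times
the difference with its left neighbour, which is what right multiplication by the Erlang block does;
for the first tail column the left neighbour `λ A^n c = A^n (-G 𝟙)` comes through the exit column of `B`.
The row sums of `W` telescope: `A^n 𝟙 + ∑_{k<n} (A^k 𝟙 - A^(k+1) 𝟙) = 𝟙`.
-/

open Matrix

section ErlangExtension

variable {R : Type*} [CommRing R] {m : Type*} [Fintype m] [DecidableEq m]

def erlangGenerator (n : ℕ) (lam : R) : Matrix (Fin n) (Fin n) R :=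
  of fun i j => if i = j then -lam else if (j : ℕ) = (i : ℕ) + 1 then lam else 0

def erlangExtension (G : Matrix m m R) (lam : R) (n : ℕ) : Matrix (m ⊕ Fin n) (m ⊕ Fin n) R :=
  fromBlocks G (of fun i (j : Fin n) => if (j : ℕ) = 0 then (-(G *ᵥ fun _ => 1)) i else 0)
    0 (erlangGenerator n lam)

def erlangIntertwiner (A : Matrix m m R) (n : ℕ) : Matrix m (m ⊕ Fin n) R :=
  fromCols (A ^ n) (of fun i (j : Fin n) => (A ^ (n - 1 - (j : ℕ)) *ᵥ (1 - A *ᵥ fun _ => 1)) i)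

omit [Fintype m] [DecidableEq m] in
theorem of_mul_erlangGenerator_apply {n : ℕ} (v : ℕ → m → R) (lam : R) (i : m) (j : Fin n) :
    ((of fun i (k : Fin n) => v k i) * erlangGenerator n lam) i j
      = -lam * v j i + if (j : ℕ) = 0 then 0 else lam * v (j - 1) i := by
  have hsplit : ∀ k : Fin n, (if k = j then -lam else if (j : ℕ) = k + 1 then lam else 0)
      = (if k = j then -lam else 0) + (if (j : ℕ) = k + 1 then lam else 0) := by
    intro k
    by_cases hkj : k = j
    · subst hkj; simp
    · simp [hkj]
  simp only [mul_apply, of_apply, erlangGenerator, hsplit, mul_add, Finset.sum_add_distrib, mul_ite,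
    mul_zero, Finset.sum_ite_eq', Finset.mem_univ, if_true]
  rw [Fin.sum_univ_eq_sum_range (fun k => if (j : ℕ) = k + 1 then v k i * lam else 0)]
  split_ifs with hj
  · simp [hj, mul_comm]
  · rw [Finset.sum_eq_single ((j : ℕ) - 1) (fun k _ hk => if_neg (by omega)) (by simp; omega),
      if_pos (by omega)]
    ring

theorem mulVec_pow_mulVec_of_eq_smul_sub_one {G A : Matrix m m R} {lam : R} (hG : G = lam • (A - 1))
    (p : ℕ) (v : m → R) : G *ᵥ (A ^ p *ᵥ v) = lam • (A ^ (p + 1) *ᵥ v - A ^ p *ᵥ v) := by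
  rw [hG, mulVec_mulVec, smul_mul, sub_mul, one_mul, ← pow_succ', smul_mulVec, sub_mulVec]

omit [DecidableEq m] in
theorem mul_of_ite_zero_apply {n : ℕ} (X : Matrix m m R) (w : m → R) (i : m) (j : Fin n) :
    (X * of fun i (j : Fin n) => if (j : ℕ) = 0 then w i else 0) i j
      = if (j : ℕ) = 0 then (X *ᵥ w) i else 0 := by
  split_ifs with hj <;> simp [mul_apply, hj, mulVec, dotProduct]

theorem mul_erlangIntertwiner {G A : Matrix m m R} {lam : R} (hG : G = lam • (A - 1)) (n : ℕ) :
    G * erlangIntertwiner A n = erlangIntertwiner A n * erlangExtension G lam n := by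
  have hcomm : Commute G A := hG ▸ ((Commute.refl A).sub_left (Commute.one_left A)).smul_left lam
  rw [erlangIntertwiner, erlangExtension, mul_fromCols, fromCols_mul_fromBlocks, Matrix.mul_zero,
    add_zero, (hcomm.pow_right n).eq]
  congr 1
  ext i j
  set c : m → R := 1 - A *ᵥ fun _ => 1
  have hexit : -(G *ᵥ fun _ => 1) = lam • c := by
    rw [hG, smul_mulVec, sub_mulVec, one_mulVec, ← smul_neg, neg_sub]; rfl
  have hY := of_mul_erlangGenerator_apply (fun k => A ^ (n - 1 - k) *ᵥ c) lam i j
  have hGY : (G * of fun i (j : Fin n) => (A ^ (n - 1 - (j : ℕ)) *ᵥ c) i) i j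
      = (G *ᵥ (A ^ (n - 1 - (j : ℕ)) *ᵥ c)) i := rfl
  rw [Matrix.add_apply, mul_of_ite_zero_apply, hexit, hY, hGY,
    mulVec_pow_mulVec_of_eq_smul_sub_one hG]
  split_ifs with hj
  · rw [show n - 1 - (j : ℕ) + 1 = n by omega]
    simp only [Pi.smul_apply, Pi.sub_apply, smul_eq_mul, mulVec_smul]
    ring
  · rw [show n - 1 - (j : ℕ) + 1 = n - 1 - ((j : ℕ) - 1) by omega]
    simp only [Pi.smul_apply, Pi.sub_apply, smul_eq_mul]
    ring

omit [Fintype m] [DecidableEq m] in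
theorem of_mulVec_one {n : ℕ} (v : Fin n → m → R) :
    (of fun i j => v j i) *ᵥ (fun _ => 1) = ∑ j, v j := by
  ext i
  simp [mulVec, dotProduct, Finset.sum_apply]

theorem erlangIntertwiner_mulVec_one (A : Matrix m m R) (n : ℕ) :
    erlangIntertwiner A n *ᵥ (fun _ => 1) = fun _ => 1 := by
  set one : m → R := fun _ => 1
  have hones : (fun _ => 1 : m ⊕ Fin n → R) = Sum.elim one fun _ => 1 := by
    funext x; cases x <;> rfl
  have htail : (of fun i (j : Fin n) => (A ^ (n - 1 - (j : ℕ)) *ᵥ (1 - A *ᵥ one)) i) *ᵥ (fun _ => 1)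
      = ∑ k ∈ Finset.range n, (A ^ k *ᵥ one - A ^ (k + 1) *ᵥ one) := by
    rw [of_mulVec_one (fun j : Fin n => A ^ (n - 1 - (j : ℕ)) *ᵥ (1 - A *ᵥ one)),
      Fin.sum_univ_eq_sum_range (fun j => A ^ (n - 1 - j) *ᵥ (1 - A *ᵥ one)),
      Finset.sum_range_reflect (fun j => A ^ j *ᵥ (1 - A *ᵥ one))]
    simp only [mulVec_sub, mulVec_mulVec, pow_succ]
    rfl
  rw [erlangIntertwiner, hones, fromCols_mulVec_sumElim, htail, Finset.sum_range_sub', pow_zero,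
    one_mulVec]
  abel

end ErlangExtension

theorem stmt10_general (u n : ℕ) (G : Matrix (Fin u) (Fin u) ℝ) (lam : ℝ)
    (hlam : 0 < lam)
    (W : Matrix (Fin u) (Fin u ⊕ Fin n) ℝ)
    (hW : W = Matrix.fromCols ((1 + lam⁻¹ • G) ^ n)
      (Matrix.of fun i (j : Fin n) =>
        (((1 + lam⁻¹ • G) ^ (n - 1 - (j : ℕ))) *ᵥ (-(lam⁻¹) • (G *ᵥ fun _ => 1))) i))
    (B : Matrix (Fin u ⊕ Fin n) (Fin u ⊕ Fin n) ℝ)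
    (hB : B = Matrix.fromBlocks G
      (Matrix.of fun (i : Fin u) (j : Fin n) =>
        if (j : ℕ) = 0 then (-(G *ᵥ fun _ => 1)) i else 0)
      0
      (Matrix.of fun i j : Fin n =>
        if i = j then -lam else if (j : ℕ) = (i : ℕ) + 1 then lam else 0)) :
    G * W = W * B ∧ W *ᵥ (fun _ => 1) = fun _ => 1 := by
  set A := 1 + lam⁻¹ • G
  have hG : G = lam • (A - 1) := by
    rw [add_sub_cancel_left, smul_smul, mul_inv_cancel₀ hlam.ne', one_smul]
  have hexit : -(lam⁻¹) • (G *ᵥ fun _ => 1) = 1 - A *ᵥ fun _ => 1 := by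
    rw [add_mulVec, one_mulVec, smul_mulVec, neg_smul]
    exact (sub_add_cancel_left (1 : Fin u → ℝ) _).symm
  have hW' : W = erlangIntertwiner A n := by rw [hW, hexit, erlangIntertwiner]
  have hB' : B = erlangExtension G lam n := hB
  rw [hW', hB']
  exact ⟨mul_erlangIntertwiner hG n, erlangIntertwiner_mulVec_one A n⟩

/-- The explicit transformation matrix `W` to the Erlang-tail extension `B` of `G`
satisfies `G W = W B` and `W 𝟙 = 𝟙`. -/
theorem stmt10 (u n : ℕ) (hn : 0 < n) (G : Matrix (Fin u) (Fin u) ℝ) (lam : ℝ)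
    (hlam : 0 < lam)
    (W : Matrix (Fin u) (Fin u ⊕ Fin n) ℝ)
    (hW : W = Matrix.fromCols ((1 + lam⁻¹ • G) ^ n)
      (Matrix.of fun i (j : Fin n) =>
        (((1 + lam⁻¹ • G) ^ (n - 1 - (j : ℕ))) *ᵥ (-(lam⁻¹) • (G *ᵥ fun _ => 1))) i))
    (B : Matrix (Fin u ⊕ Fin n) (Fin u ⊕ Fin n) ℝ)
    (hB : B = Matrix.fromBlocks G
      (Matrix.of fun (i : Fin u) (j : Fin n) =>
        if (j : ℕ) = 0 then (-(G *ᵥ fun _ => 1)) i else 0)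
      0
      (Matrix.of fun i j : Fin n =>
        if i = j then -lam else if (j : ℕ) = (i : ℕ) + 1 then lam else 0)) :
    G * W = W * B ∧ W *ᵥ (fun _ => 1) = fun _ => 1 :=
  stmt10_general u n G lam hlam W hW B hB
end

section
/- A Feedback-Erlang block with parameters (b, σ, z), i.e., the b×b matrix M with diagonal entries −σ, superdiagonal entries σ, and entry zσ in position (b,1), has characteristic polynomial whose roots are the b solutions of (σ + x)^b = z·σ^b; its eigenvalue of maximal real part is real and equals −σ(1 − z^{1/b}). -/
/-!
The block is `σ • (S - 1)`, where `S` shifts a vector cyclically by one place and multiplies the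
entry wrapping around by `z`. An eigenvector of `S` for `r` is forced by the shift equations to be
geometric, `v i = r ^ i * v 0`, and the wrap-around equation then says exactly `r ^ b = z`; with
`x = σ (r - 1)` this is `(σ + x) ^ b = z σ ^ b`. All such `σ + x` have modulus `σ z^{1/b}`, so
`Re x ≤ -σ + σ z^{1/b}`, with equality at the real root.
-/

open Matrix

theorem Matrix.mem_spectrum_iff_exists_mulVec_eq_smul {K n : Type*} [Field K] [Fintype n]
    [DecidableEq n] {A : Matrix n n K} {μ : K} :
    μ ∈ spectrum K A ↔ ∃ v ≠ 0, A *ᵥ v = μ • v := by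
  rw [← spectrum_toLin', ← Module.End.hasEigenvalue_iff_mem_spectrum,
    Module.End.hasEigenvalue_iff, Submodule.ne_bot_iff]
  simp [and_comm]

theorem Complex.re_le_of_pow_eq_ofReal_pow {w : ℂ} {c : ℝ} {b : ℕ} (hc : 0 ≤ c) (hb : b ≠ 0)
    (h : w ^ b = (c : ℂ) ^ b) : w.re ≤ c := by
  have hnorm : ‖w‖ = c := by
    have := congrArg norm h
    rwa [norm_pow, norm_pow, Complex.norm_real, Real.norm_of_nonneg hc,
      pow_left_inj₀ (norm_nonneg _) hc hb] at this
  exact hnorm ▸ Complex.re_le_norm w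

section FeedbackErlang

variable {K : Type*} [Field K] {b : ℕ}

def weightedCyclicShift (z : K) (v : Fin b → K) : Fin b → K :=
  fun i => if h : (i : ℕ) + 1 < b then v ⟨i + 1, h⟩ else z * v ⟨0, i.pos⟩

theorem eq_pow_mul_of_weightedCyclicShift_eq_smul {z r : K} {v : Fin b → K}
    (hv : weightedCyclicShift z v = r • v) (k : ℕ) (hk : k < b) :
    v ⟨k, hk⟩ = r ^ k * v ⟨0, by omega⟩ := by
  induction k with
  | zero => simp
  | succ k ih =>
    have hrow := congrFun hv ⟨k, by omega⟩
    simp only [weightedCyclicShift, dif_pos hk, Pi.smul_apply, smul_eq_mul] at hrow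
    rw [hrow, ih, pow_succ', mul_assoc]

theorem exists_weightedCyclicShift_eq_smul_iff (hb : 0 < b) {z r : K} :
    (∃ v : Fin b → K, v ≠ 0 ∧ weightedCyclicShift z v = r • v) ↔ r ^ b = z := by
  constructor
  · rintro ⟨v, hv0, hv⟩
    have hgeom := eq_pow_mul_of_weightedCyclicShift_eq_smul hv
    have hv₀ : v ⟨0, hb⟩ ≠ 0 := fun h0 ↦
      hv0 (funext fun i ↦ by simpa [h0] using hgeom i i.isLt)
    have hlast := congrFun hv ⟨b - 1, by omega⟩
    simp only [weightedCyclicShift, Pi.smul_apply, smul_eq_mul, hgeom (b - 1), ← mul_assoc,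
      ← pow_succ', Nat.sub_add_cancel hb, lt_self_iff_false, dite_false] at hlast
    exact (mul_right_cancel₀ hv₀ hlast).symm
  · intro hr
    refine ⟨fun i ↦ r ^ (i : ℕ), fun h ↦ by simpa using congrFun h ⟨0, hb⟩, funext fun i ↦ ?_⟩
    simp only [weightedCyclicShift, Pi.smul_apply, smul_eq_mul]
    split_ifs with h
    · exact pow_succ' r i
    · rw [pow_zero, mul_one, ← hr, ← pow_succ', show (i : ℕ) + 1 = b by omega]

def feedbackErlang (b : ℕ) (σ z : K) : Matrix (Fin b) (Fin b) K :=
  of fun i j => (if i = j then -σ else 0) + (if (j : ℕ) = (i : ℕ) + 1 then σ else 0) +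
    (if (i : ℕ) = b - 1 ∧ (j : ℕ) = 0 then z * σ else 0)

theorem feedbackErlang_mulVec (σ z : K) (v : Fin b → K) :
    feedbackErlang b σ z *ᵥ v = σ • (weightedCyclicShift z v - v) := by
  ext i
  simp only [feedbackErlang, weightedCyclicShift, mulVec, dotProduct, of_apply, add_mul, ite_mul,
    zero_mul, Finset.sum_add_distrib, Finset.sum_ite_eq, Finset.mem_univ, if_true, Pi.smul_apply,
    Pi.sub_apply, smul_eq_mul]
  by_cases h : (i : ℕ) + 1 < b
  · have hsuper (j : Fin b) : (j : ℕ) = i + 1 ↔ j = ⟨i + 1, h⟩ := by rw [Fin.ext_iff]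
    have hcorner : (i : ℕ) ≠ b - 1 := by omega
    simp only [hsuper, hcorner, false_and, if_false, Finset.sum_ite_eq', Finset.mem_univ, if_true,
      Finset.sum_const_zero, dif_pos h]
    ring
  · have hsuper (j : Fin b) : (j : ℕ) ≠ i + 1 := by omega
    have hcorner : (i : ℕ) = b - 1 := by omega
    have hfirst (j : Fin b) : (j : ℕ) = 0 ↔ j = ⟨0, i.pos⟩ := by rw [Fin.ext_iff]
    simp only [hsuper, if_false, Finset.sum_const_zero, dif_neg h]
    simp only [hcorner, hfirst, true_and, Finset.sum_ite_eq', Finset.mem_univ, if_true]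
    ring

theorem mem_spectrum_feedbackErlang_iff (hb : 0 < b) {σ : K} (hσ : σ ≠ 0) (z x : K) :
    x ∈ spectrum K (feedbackErlang b σ z) ↔ (σ + x) ^ b = z * σ ^ b := by
  have hshift (v : Fin b → K) : σ • (weightedCyclicShift z v - v) = x • v ↔
      weightedCyclicShift z v = ((σ + x) / σ) • v := by
    rw [div_eq_inv_mul, mul_smul, eq_inv_smul_iff₀ hσ, smul_sub, sub_eq_iff_eq_add, add_smul,
      add_comm]
  simp only [Matrix.mem_spectrum_iff_exists_mulVec_eq_smul, feedbackErlang_mulVec, hshift,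
    exists_weightedCyclicShift_eq_smul_iff hb, div_pow, div_eq_iff (pow_ne_zero b hσ)]

end FeedbackErlang

/-- A Feedback-Erlang block with parameters `(b, σ, z)` has eigenvalues exactly the solutions
of `(σ + x)^b = z σ^b`, and its eigenvalue of maximal real part is `-σ(1 - z^{1/b})`. -/
theorem stmt11 (b : ℕ) (hb : 1 ≤ b) (σ z : ℝ) (hσ : 0 < σ) (hz : z ∈ Set.Ico (0 : ℝ) 1)
    (M : Matrix (Fin b) (Fin b) ℂ)
    (hM : M = Matrix.of fun i j : Fin b =>
      (if i = j then (-σ : ℂ) else 0) + (if (j : ℕ) = (i : ℕ) + 1 then (σ : ℂ) else 0) +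
      (if (i : ℕ) = b - 1 ∧ (j : ℕ) = 0 then ((z : ℂ) * σ) else 0)) :
    (∀ x : ℂ, x ∈ spectrum ℂ M ↔ ((σ : ℂ) + x) ^ b = (z : ℂ) * (σ : ℂ) ^ b) ∧
    (((-σ * (1 - z ^ ((1 : ℝ) / b)) : ℝ) : ℂ) ∈ spectrum ℂ M) ∧
    (∀ ν ∈ spectrum ℂ M, ν.re ≤ -σ * (1 - z ^ ((1 : ℝ) / b))) := by
  obtain rfl : M = feedbackErlang b (σ : ℂ) z := hM
  have hspec := mem_spectrum_feedbackErlang_iff hb (Complex.ofReal_ne_zero.2 hσ.ne') (z : ℂ)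
  set c := z ^ ((1 : ℝ) / b) with hc
  have hroot : (σ * c) ^ b = z * σ ^ b := by
    rw [hc, mul_pow, one_div, Real.rpow_inv_natCast_pow hz.1 (by omega), mul_comm]
  refine ⟨hspec, ?_, fun ν hν ↦ ?_⟩
  · rw [hspec, ← Complex.ofReal_add, show σ + -σ * (1 - c) = σ * c by ring]
    exact_mod_cast hroot
  · have hν' : ((σ : ℂ) + ν) ^ b = ((σ * c : ℝ) : ℂ) ^ b := by
      rw [(hspec ν).1 hν]; exact_mod_cast hroot.symm
    have hre := Complex.re_le_of_pow_eq_ofReal_pow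
      (mul_nonneg hσ.le (Real.rpow_nonneg hz.1 _)) (by omega) hν'
    simp only [Complex.add_re, Complex.ofReal_re] at hre
    linarith
end

section
/- Let H be a block upper bidiagonal matrix with blocks H₁₁ (upper-left, p×p), H₁₂ (upper-right), H₂₂ (lower-right), and zero lower-left block, where H₁₁ is nilpotent with H₁₁^p = 0. Then the upper-right block of e^{Hx} equals Σ_{k=0}^{p−1} H₁₁^k H₁₂ H₂₂^{−(k+1)} (e^{xH₂₂} − I − H₂₂x − ⋯ − (H₂₂x)^k/k!), provided H₂₂ is invertible. -/
/-!
Because the lower-left block vanishes, the upper-right block of `Hⁿ` is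
`Σ_{k<n} H₁₁ᵏ H₁₂ H₂₂ⁿ⁻¹⁻ᵏ`. Nilpotency of `H₁₁` cuts the sum off at `k < p`, and invertibility
of `H₂₂` turns `H₂₂ⁿ⁻¹⁻ᵏ` into `H₂₂^{-(k+1)} H₂₂ⁿ`. Summing over `n` with weights `xⁿ/n!`, the
coefficient of `H₁₁ᵏ H₁₂ H₂₂^{-(k+1)}` is the tail `Σ_{n>k} (x H₂₂)ⁿ/n!` of the exponential
series, i.e. `e^{x H₂₂}` minus its Taylor polynomial of degree `k`.
-/

open Matrix NormedSpace Finset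
open scoped Nat

theorem HasSum.ite_lt {M : Type*} [AddCommGroup M] [TopologicalSpace M] [IsTopologicalAddGroup M]
    {f : ℕ → M} {a : M} (hf : HasSum f a) (k : ℕ) :
    HasSum (fun n => if k < n then f n else 0) (a - ∑ n ∈ range (k + 1), f n) := by
  have hhead : HasSum (fun n => if k < n then 0 else f n) (∑ n ∈ range (k + 1), f n) := by
    rw [← sum_ite_of_false (p := (k < ·)) (f := 0) fun n hn => by simpa [Nat.lt_succ_iff] using hn]
    exact hasSum_sum_of_ne_finset_zero fun n hn => if_pos (by simpa [Nat.lt_succ_iff] using hn)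
  convert hf.sub hhead using 2 with n
  split_ifs <;> simp

theorem NormedSpace.hasSum_pow_div_factorial_smul_exp {𝕂 𝔸 : Type*} [NontriviallyNormedField 𝕂]
    [CharZero 𝕂] [ContinuousSMul ℚ 𝕂] [NormedRing 𝔸] [NormedAlgebra 𝕂 𝔸] [CompleteSpace 𝔸]
    (x : 𝕂) (a : 𝔸) : HasSum (fun n => (x ^ n / n !) • a ^ n) (exp (x • a)) := by
  convert exp_series_hasSum_exp' (𝕂 := 𝕂) (x • a) using 2 with n
  rw [smul_pow, smul_smul, inv_mul_eq_div]

section MatrixTopology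

variable {X l m n o R : Type*} [TopologicalSpace R]

theorem HasSum.matrix_toBlocks₁₂ [AddCommMonoid R] {f : X → Matrix (m ⊕ n) (l ⊕ o) R}
    {a : Matrix (m ⊕ n) (l ⊕ o) R} (hf : HasSum f a) :
    HasSum (fun x => (f x).toBlocks₁₂) a.toBlocks₁₂ :=
  hf.map (⟨⟨toBlocks₁₂, rfl⟩, fun _ _ => rfl⟩ : Matrix (m ⊕ n) (l ⊕ o) R →+ Matrix m o R)
    (continuous_id.matrix_submatrix Sum.inl Sum.inr)

theorem HasSum.matrix_mul_left [Fintype n] [NonUnitalNonAssocSemiring R]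
    [IsTopologicalSemiring R] (A : Matrix m n R) {f : X → Matrix n o R} {a : Matrix n o R}
    (hf : HasSum f a) : HasSum (fun x => A * f x) (A * a) :=
  hf.map (⟨⟨(A * ·), Matrix.mul_zero A⟩, Matrix.mul_add A⟩ : Matrix n o R →+ Matrix m o R)
    (continuous_const.matrix_mul continuous_id)

end MatrixTopology

namespace Matrix

variable {m n R : Type*} [Fintype m] [DecidableEq m] [Fintype n] [DecidableEq n]

theorem hasSum_pow_div_factorial_smul_exp {𝕂 : Type*} [RCLike 𝕂] (x : 𝕂) (A : Matrix m m 𝕂) :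
    HasSum (fun k => (x ^ k / k !) • A ^ k) (exp (x • A)) := by
  open scoped Norms.Operator in exact NormedSpace.hasSum_pow_div_factorial_smul_exp x A

theorem fromBlocks_zero₂₁_pow [Semiring R] (A : Matrix m m R) (B : Matrix m n R)
    (C : Matrix n n R) (k : ℕ) :
    fromBlocks A B 0 C ^ k =
      fromBlocks (A ^ k) (∑ i ∈ range k, A ^ i * B * C ^ (k - 1 - i)) 0 (C ^ k) := by
  induction k with
  | zero => simp [fromBlocks_one]
  | succ k ih =>
    rw [pow_succ', ih, fromBlocks_multiply, sum_range_succ', Matrix.mul_sum]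
    simp only [Matrix.mul_zero, Matrix.zero_mul, add_zero, zero_add, ← pow_succ', pow_zero,
      Matrix.one_mul, Nat.sub_zero, Nat.add_sub_cancel]
    congr 2
    refine sum_congr rfl fun i hi => ?_
    rw [← Matrix.mul_assoc, ← Matrix.mul_assoc, ← pow_succ']
    congr 2
    have := mem_range.mp hi
    omega

variable [CommRing R]

theorem inv_pow_mul_pow_of_le {C : Matrix n n R} (hC : IsUnit C.det) {i k : ℕ} (h : i ≤ k) :
    C⁻¹ ^ i * C ^ k = C ^ (k - i) := by
  rw [pow_inv_comm', inv_pow', pow_sub' C hC h]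

theorem sum_range_pow_mul_mul_pow_of_pow_eq_zero {p : ℕ} {A : Matrix m m R} (hA : A ^ p = 0)
    (B : Matrix m n R) {C : Matrix n n R} (hC : IsUnit C.det) (k : ℕ) :
    ∑ i ∈ range k, A ^ i * B * C ^ (k - 1 - i) =
      ∑ i ∈ range p, A ^ i * B * C⁻¹ ^ (i + 1) * (if i < k then C ^ k else 0) := by
  calc ∑ i ∈ range k, A ^ i * B * C ^ (k - 1 - i)
      = ∑ i ∈ range k, if i ∈ range p then A ^ i * B * C ^ (k - 1 - i) else 0 := by
        refine sum_congr rfl fun i _ => ?_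
        split_ifs with hi
        · rfl
        · rw [pow_eq_zero_of_le (by simpa using hi) hA, Matrix.zero_mul, Matrix.zero_mul]
    _ = ∑ i ∈ range p, if i ∈ range k then A ^ i * B * C ^ (k - 1 - i) else 0 := by
        rw [sum_ite_mem, sum_ite_mem, inter_comm]
    _ = _ := by
        refine sum_congr rfl fun i _ => ?_
        simp only [mem_range]
        split_ifs with hi
        · rw [Matrix.mul_assoc _ (C⁻¹ ^ _), inv_pow_mul_pow_of_le hC hi, Nat.sub_sub,
            Nat.add_comm 1 i]
        · rw [Matrix.mul_zero]

end Matrix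

/-- For a block upper bidiagonal `H = [[H₁₁, H₁₂], [0, H₂₂]]` with `H₁₁^p = 0` and `H₂₂`
invertible, the upper-right block of `e^{Hx}` is
`Σ_{k<p} H₁₁^k H₁₂ H₂₂^{-(k+1)} (e^{x H₂₂} - Σ_{j≤k} (x H₂₂)^j / j!)`. -/
theorem stmt17 (p q : ℕ) (H11 : Matrix (Fin p) (Fin p) ℝ) (H12 : Matrix (Fin p) (Fin q) ℝ)
    (H22 : Matrix (Fin q) (Fin q) ℝ) (hnil : H11 ^ p = 0) (hinv : IsUnit H22.det)
    (H : Matrix (Fin p ⊕ Fin q) (Fin p ⊕ Fin q) ℝ)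
    (hH : H = Matrix.fromBlocks H11 H12 0 H22) :
    ∀ x : ℝ, (NormedSpace.exp (x • H)).toBlocks₁₂ =
      ∑ k ∈ Finset.range p, H11 ^ k * H12 * H22⁻¹ ^ (k + 1) *
        (NormedSpace.exp (x • H22) -
          ∑ j ∈ Finset.range (k + 1), (x ^ j / (Nat.factorial j : ℝ)) • H22 ^ j) := by
  intro x
  subst hH
  have hseries :=
    (hasSum_pow_div_factorial_smul_exp x (fromBlocks H11 H12 0 H22)).matrix_toBlocks₁₂
  have htails := fun k => ((hasSum_pow_div_factorial_smul_exp x H22).ite_lt k).matrix_mul_left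
    (H11 ^ k * H12 * H22⁻¹ ^ (k + 1))
  refine hseries.unique ?_
  convert hasSum_sum fun k _ => htails k using 1
  funext n
  rw [fromBlocks_zero₂₁_pow, fromBlocks_smul, toBlocks_fromBlocks₁₂,
    sum_range_pow_mul_mul_pow_of_pow_eq_zero hnil H12 hinv, smul_sum]
  refine sum_congr rfl fun k _ => ?_
  rw [← Matrix.mul_smul, smul_ite, smul_zero]
end
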